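/- arXiv:2203.07717 — 4 statements merged into one kernel-verified Lean document; each statement's English description precedes it below -/
import Mathlib

section
/- Let H = (V, E) be a hypergraph in which every vertex belongs to at least one hyperedge, let f be a fractional edge cover of H, let D be a finite set, and let S be a nonempty finite set of tuples t : V → D. Then |S| ≤ ∏_{e ∈ E} |π_e(S)|^{f(e)}, where π_e(S) = { t restricted to e : t ∈ S } is the projection of S onto the coordinates in e. -/
open Finset

lemma holder_one {ι κ : Type*} (s : Finset ι) (t : Finset κ) (w : ι → ℝ) (a : ι → κ → ℝ)
    (hw : ∀ i ∈ s, 0 ≤ w i) (hw1 : ∑ i ∈ s, w i = 1)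
    (ha : ∀ i ∈ s, ∀ d ∈ t, 0 ≤ a i d) :
    ∑ d ∈ t, ∏ i ∈ s, a i d ^ w i ≤ ∏ i ∈ s, (∑ d ∈ t, a i d) ^ w i := by
  classical
  set s' := s.filter (fun i => w i ≠ 0) with hs'
  have hsub : s' ⊆ s := filter_subset _ _
  have hprod : ∀ g : ι → ℝ, ∏ i ∈ s, g i ^ w i = ∏ i ∈ s', g i ^ w i := by
    intro g
    refine (Finset.prod_subset hsub ?_).symm
    intro i hi hni
    have : w i = 0 := by
      by_contra h
      exact hni (mem_filter.mpr ⟨hi, h⟩)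
    simp [this]
  have hw1' : ∑ i ∈ s', w i = 1 := by
    rw [← hw1]
    refine Finset.sum_subset hsub ?_
    intro i hi hni
    by_contra h
    exact hni (mem_filter.mpr ⟨hi, h⟩)
  simp only [hprod]
  by_cases hX : ∃ i ∈ s', (∑ d ∈ t, a i d) = 0
  · obtain ⟨i, hi, hXi⟩ := hX
    have hwi : w i ≠ 0 := (mem_filter.mp hi).2
    have his : i ∈ s := hsub hi
    have hzero : ∀ d ∈ t, a i d = 0 := by
      intro d hd
      exact (Finset.sum_eq_zero_iff_of_nonneg (fun d hd => ha i his d hd)).mp hXi d hd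
    have hL : ∑ d ∈ t, ∏ j ∈ s', a j d ^ w j = 0 := by
      refine Finset.sum_eq_zero (fun d hd => ?_)
      refine Finset.prod_eq_zero hi ?_
      rw [hzero d hd]
      exact Real.zero_rpow hwi
    rw [hL]
    exact Finset.prod_nonneg fun j hj => Real.rpow_nonneg
      (Finset.sum_nonneg fun d hd => ha j (hsub hj) d hd) _
  · push_neg at hX
    have hXpos : ∀ i ∈ s', 0 < ∑ d ∈ t, a i d := fun i hi =>
      lt_of_le_of_ne (Finset.sum_nonneg fun d hd => ha i (hsub hi) d hd) (Ne.symm (hX i hi))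
    have key : ∀ d ∈ t, ∏ i ∈ s', a i d ^ w i
        ≤ (∏ i ∈ s', (∑ d' ∈ t, a i d') ^ w i) * ∑ i ∈ s', w i * (a i d / ∑ d' ∈ t, a i d') := by
      intro d hd
      have h1 : ∏ i ∈ s', a i d ^ w i
          = (∏ i ∈ s', (∑ d' ∈ t, a i d') ^ w i) * ∏ i ∈ s', (a i d / ∑ d' ∈ t, a i d') ^ w i := by
        rw [← Finset.prod_mul_distrib]
        refine Finset.prod_congr rfl fun i hi => ?_
        rw [← Real.mul_rpow (le_of_lt (hXpos i hi)) (div_nonneg (ha i (hsub hi) d hd) (le_of_lt (hXpos i hi)))]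
        rw [mul_div_cancel₀ _ (ne_of_gt (hXpos i hi))]
      rw [h1]
      refine mul_le_mul_of_nonneg_left ?_ (Finset.prod_nonneg fun i hi =>
        Real.rpow_nonneg (le_of_lt (hXpos i hi)) _)
      exact Real.geom_mean_le_arith_mean_weighted s' w _ (fun i hi => hw i (hsub hi)) hw1'
        (fun i hi => div_nonneg (ha i (hsub hi) d hd) (le_of_lt (hXpos i hi)))
    calc ∑ d ∈ t, ∏ i ∈ s', a i d ^ w i
        ≤ ∑ d ∈ t, (∏ i ∈ s', (∑ d' ∈ t, a i d') ^ w i) * ∑ i ∈ s', w i * (a i d / ∑ d' ∈ t, a i d') :=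
          Finset.sum_le_sum key
      _ = (∏ i ∈ s', (∑ d' ∈ t, a i d') ^ w i) * ∑ d ∈ t, ∑ i ∈ s', w i * (a i d / ∑ d' ∈ t, a i d') := by
          rw [← Finset.mul_sum]
      _ = (∏ i ∈ s', (∑ d' ∈ t, a i d') ^ w i) * ∑ i ∈ s', w i := by
          congr 1
          rw [Finset.sum_comm]
          refine Finset.sum_congr rfl fun i hi => ?_
          rw [← Finset.mul_sum]
          simp only [div_eq_mul_inv, ← Finset.sum_mul]
          rw [mul_inv_cancel₀ (ne_of_gt (hXpos i hi)), mul_one]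
      _ = ∏ i ∈ s', (∑ d' ∈ t, a i d') ^ w i := by rw [hw1', mul_one]

lemma sum_rpow_le_rpow_sum {κ : Type*} (t : Finset κ) (y : κ → ℝ)
    (hy : ∀ d ∈ t, 0 ≤ y d) {W : ℝ} (hW : 1 ≤ W) :
    ∑ d ∈ t, y d ^ W ≤ (∑ d ∈ t, y d) ^ W := by
  classical
  set Y := ∑ d ∈ t, y d with hY
  have hYnn : 0 ≤ Y := Finset.sum_nonneg hy
  rcases eq_or_lt_of_le hYnn with hY0 | hYpos
  · have hall : ∀ d ∈ t, y d = 0 := by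
      intro d hd
      exact (Finset.sum_eq_zero_iff_of_nonneg hy).mp hY0.symm d hd
    have : ∑ d ∈ t, y d ^ W = 0 := by
      refine Finset.sum_eq_zero fun d hd => ?_
      rw [hall d hd, Real.zero_rpow (by linarith)]
    rw [this, ← hY0, Real.zero_rpow (by linarith)]
  · have key : ∀ d ∈ t, y d ^ W ≤ y d * Y ^ (W - 1) := by
      intro d hd
      rcases eq_or_lt_of_le (hy d hd) with h0 | hpos
      · rw [← h0, Real.zero_rpow (by linarith), zero_mul]
      · have hdY : y d ≤ Y := Finset.single_le_sum hy hd
        calc y d ^ W = y d ^ (1 + (W - 1)) := by ring_nf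
          _ = y d ^ (1:ℝ) * y d ^ (W - 1) := Real.rpow_add hpos 1 (W - 1)
          _ = y d * y d ^ (W - 1) := by rw [Real.rpow_one]
          _ ≤ y d * Y ^ (W - 1) := by
              refine mul_le_mul_of_nonneg_left ?_ (hy d hd)
              exact Real.rpow_le_rpow (le_of_lt hpos) hdY (by linarith)
    calc ∑ d ∈ t, y d ^ W ≤ ∑ d ∈ t, y d * Y ^ (W - 1) := Finset.sum_le_sum key
      _ = Y * Y ^ (W - 1) := by rw [← Finset.sum_mul]
      _ = Y ^ (1:ℝ) * Y ^ (W - 1) := by rw [Real.rpow_one]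
      _ = Y ^ (1 + (W - 1)) := (Real.rpow_add hYpos 1 (W - 1)).symm
      _ = Y ^ W := by ring_nf

lemma holder_ge_one {ι κ : Type*} (s : Finset ι) (t : Finset κ) (w : ι → ℝ) (a : ι → κ → ℝ)
    (hw : ∀ i ∈ s, 0 ≤ w i) (hw1 : 1 ≤ ∑ i ∈ s, w i)
    (ha : ∀ i ∈ s, ∀ d ∈ t, 0 ≤ a i d) :
    ∑ d ∈ t, ∏ i ∈ s, a i d ^ w i ≤ ∏ i ∈ s, (∑ d ∈ t, a i d) ^ w i := by
  classical
  set W := ∑ i ∈ s, w i with hWdef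
  have hWpos : 0 < W := by linarith
  have hw' : ∀ i ∈ s, 0 ≤ w i / W := fun i hi => div_nonneg (hw i hi) (le_of_lt hWpos)
  have hw1' : ∑ i ∈ s, w i / W = 1 := by
    rw [← Finset.sum_div, div_self (ne_of_gt hWpos)]
  have hrw : ∀ (x : ℝ), 0 ≤ x → ∀ i ∈ s, x ^ w i = (x ^ (w i / W)) ^ W := by
    intro x hx i hi
    rw [← Real.rpow_mul hx, div_mul_cancel₀ _ (ne_of_gt hWpos)]
  calc ∑ d ∈ t, ∏ i ∈ s, a i d ^ w i
      = ∑ d ∈ t, (∏ i ∈ s, a i d ^ (w i / W)) ^ W := by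
        refine Finset.sum_congr rfl fun d hd => ?_
        rw [← Real.finset_prod_rpow s _ (fun i hi => Real.rpow_nonneg (ha i hi d hd) _)]
        exact Finset.prod_congr rfl fun i hi => hrw _ (ha i hi d hd) i hi
    _ ≤ (∑ d ∈ t, ∏ i ∈ s, a i d ^ (w i / W)) ^ W := by
        refine sum_rpow_le_rpow_sum t _ (fun d hd => ?_) hw1
        exact Finset.prod_nonneg fun i hi => Real.rpow_nonneg (ha i hi d hd) _
    _ ≤ (∏ i ∈ s, (∑ d ∈ t, a i d) ^ (w i / W)) ^ W := by
        refine Real.rpow_le_rpow ?_ ?_ (le_of_lt hWpos)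
        · exact Finset.sum_nonneg fun d hd =>
            Finset.prod_nonneg fun i hi => Real.rpow_nonneg (ha i hi d hd) _
        · exact holder_one s t (fun i => w i / W) a hw' hw1' ha
    _ = ∏ i ∈ s, (∑ d ∈ t, a i d) ^ w i := by
        rw [← Real.finset_prod_rpow s _ (fun i hi => Real.rpow_nonneg
          (Finset.sum_nonneg fun d hd => ha i hi d hd) _)]
        exact Finset.prod_congr rfl fun i hi =>
          (hrw _ (Finset.sum_nonneg fun d hd => ha i hi d hd) i hi).symm

section Proj
variable {V D : Type} [Fintype V] [DecidableEq V] [Fintype D] [DecidableEq D]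

set_option linter.unusedSectionVars false

def proj (B : Finset V) (S : Finset (V → D)) : Finset ({x // x ∈ B} → D) :=
  S.image fun t x => t x.1

lemma proj_card_congr {B B' : Finset V} (h : B = B') (S : Finset (V → D)) :
    (proj B S).card = (proj B' S).card := by subst h; rfl

lemma proj_mono {B : Finset V} {S S' : Finset (V → D)} (h : S' ⊆ S) :
    proj B S' ⊆ proj B S := by
  classical
  simpa [proj] using Finset.image_subset_image h

lemma proj_nonempty {B : Finset V} {S : Finset (V → D)} (h : S.Nonempty) :
    (proj B S).Nonempty := h.image _

lemma proj_empty (B : Finset V) : (proj B (∅ : Finset (V → D))) = ∅ := by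
  classical simp [proj]

lemma proj_insert_card (v : V) (B : Finset V) (hv : v ∉ B) (S : Finset (V → D)) :
    (proj (insert v B) S).card
      = ∑ d ∈ Finset.univ, (proj B (S.filter fun t => t v = d)).card := by
  classical
  have hvmem : v ∈ insert v B := Finset.mem_insert_self v B
  rw [Finset.card_eq_sum_card_fiberwise
    (f := fun u : {x // x ∈ insert v B} → D => u ⟨v, hvmem⟩)
    (t := Finset.univ) (fun u _ => Finset.mem_univ _)]
  refine Finset.sum_congr rfl fun d _ => ?_
  refine Finset.card_bij
    (fun u _ => fun x : {x // x ∈ B} => u ⟨x.1, Finset.mem_insert_of_mem x.2⟩) ?_ ?_ ?_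
  · intro u hu
    obtain ⟨hu1, hu2⟩ := Finset.mem_filter.mp hu
    obtain ⟨t, ht, rfl⟩ := Finset.mem_image.mp hu1
    refine Finset.mem_image.mpr ⟨t, ?_, rfl⟩
    exact Finset.mem_filter.mpr ⟨ht, hu2⟩
  · intro u1 hu1 u2 hu2 heq
    have h1 := (Finset.mem_filter.mp hu1).2
    have h2 := (Finset.mem_filter.mp hu2).2
    funext x
    rcases Finset.mem_insert.mp x.2 with h | h
    · have hx : x = ⟨v, hvmem⟩ := Subtype.ext h
      rw [hx, h1, h2]
    · have hx : x = ⟨x.1, Finset.mem_insert_of_mem h⟩ := Subtype.ext rfl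
      rw [hx]
      exact congrFun heq ⟨x.1, h⟩
  · intro w hw
    obtain ⟨t, ht, rfl⟩ := Finset.mem_image.mp hw
    obtain ⟨htS, htv⟩ := Finset.mem_filter.mp ht
    refine ⟨fun x : {x // x ∈ insert v B} => t x.1, ?_, rfl⟩
    refine Finset.mem_filter.mpr ⟨Finset.mem_image.mpr ⟨t, htS, rfl⟩, htv⟩

end Proj

section Main
variable {V D : Type} [Fintype V] [DecidableEq V] [Fintype D] [DecidableEq D]

lemma proj_empty_card_one {S : Finset (V → D)} (hS : S.Nonempty) :
    (proj (∅ : Finset V) S).card = 1 := by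
  haveI : IsEmpty {x : V // x ∈ (∅ : Finset V)} :=
    ⟨fun x => Finset.notMem_empty x.1 x.2⟩
  haveI : Subsingleton ({x : V // x ∈ (∅ : Finset V)} → D) :=
    ⟨fun u1 u2 => funext fun x => isEmptyElim x⟩
  refine le_antisymm (Finset.card_le_one.mpr fun a _ b _ => Subsingleton.elim a b) ?_
  exact Finset.Nonempty.card_pos (proj_nonempty hS)

lemma shearer_aux (E : Finset (Finset V)) (f : Finset V → ℝ) (hf0 : ∀ e ∈ E, 0 ≤ f e)
    (A : Finset V) :
    (∀ u ∈ A, 1 ≤ ∑ e ∈ E.filter (fun e => u ∈ e), f e) →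
    ∀ S : Finset (V → D), S.Nonempty →
    ((proj A S).card : ℝ) ≤ ∏ e ∈ E, ((proj (e ∩ A) S).card : ℝ) ^ f e := by
  classical
  induction A using Finset.induction_on with
  | empty =>
    intro _ S hS
    have h1 : ∀ B : Finset V, B = ∅ → ((proj B S).card : ℝ) = 1 := by
      intro B hB
      rw [proj_card_congr hB, proj_empty_card_one hS, Nat.cast_one]
    rw [h1 ∅ rfl]
    rw [Finset.prod_congr rfl (fun e he => by rw [h1 (e ∩ ∅) (Finset.inter_empty e), Real.one_rpow])]
    rw [Finset.prod_const_one]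
  | @insert v A hvA ih =>
    intro hcov S hS
    set T : D → Finset (V → D) := fun d => S.filter (fun t => t v = d) with hT
    set Dg : Finset D := Finset.univ.filter (fun d => (T d).Nonempty) with hDg
    -- decomposition over good values
    have key : ∀ B : Finset V, v ∉ B → (proj (insert v B) S).card = ∑ d ∈ Dg, (proj B (T d)).card := by
      intro B hvB
      rw [proj_insert_card v B hvB S]
      symm
      refine Finset.sum_subset (Finset.subset_univ _) ?_
      intro d _ hd
      have : T d = ∅ := by
        rw [← Finset.not_nonempty_iff_eq_empty]
        intro hne
        exact hd (Finset.mem_filter.mpr ⟨Finset.mem_univ d, hne⟩)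
      rw [this, proj_empty, Finset.card_empty]
    have hTS : ∀ d, T d ⊆ S := fun d => Finset.filter_subset _ _
    set Ev : Finset (Finset V) := E.filter (fun e => v ∈ e) with hEv
    set b : Finset V → ℝ := fun e => ((proj (e ∩ insert v A) S).card : ℝ) with hb
    set a : Finset V → D → ℝ := fun e d => ((proj (e ∩ A) (T d)).card : ℝ) with ha
    have ha0 : ∀ e d, 0 ≤ a e d := fun e d => Nat.cast_nonneg _
    have hb0 : ∀ e, 0 ≤ b e := fun e => Nat.cast_nonneg _
    -- for edges not containing v
    have hnv : ∀ e, v ∉ e → ∀ d, a e d ≤ b e := by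
      intro e hve d
      have hinter : e ∩ insert v A = e ∩ A := by
        ext x
        simp only [Finset.mem_inter, Finset.mem_insert]
        constructor
        · rintro ⟨hxe, hx⟩
          rcases hx with rfl | hx
          · exact absurd hxe hve
          · exact ⟨hxe, hx⟩
        · rintro ⟨hxe, hx⟩
          exact ⟨hxe, Or.inr hx⟩
      rw [hb, ha]
      simp only
      rw [proj_card_congr hinter S]
      exact_mod_cast Finset.card_le_card (proj_mono (hTS d))
    -- for edges containing v
    have hv : ∀ e, v ∈ e → (∑ d ∈ Dg, a e d) = b e := by
      intro e hve
      have hinter : insert v (e ∩ A) = e ∩ insert v A := by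
        ext x
        simp only [Finset.mem_inter, Finset.mem_insert]
        constructor
        · rintro (rfl | ⟨hxe, hx⟩)
          · exact ⟨hve, Or.inl rfl⟩
          · exact ⟨hxe, Or.inr hx⟩
        · rintro ⟨hxe, rfl | hx⟩
          · exact Or.inl rfl
          · exact Or.inr ⟨hxe, hx⟩
      have := key (e ∩ A) (fun h => hvA (Finset.mem_inter.mp h).2)
      rw [hb]
      simp only
      rw [← proj_card_congr hinter S, this]
      push_cast
      rfl
    -- main chain
    have hLHS : ((proj (insert v A) S).card : ℝ) = ∑ d ∈ Dg, ((proj A (T d)).card : ℝ) := by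
      rw [key A hvA]; push_cast; rfl
    have hIH : ∀ d ∈ Dg, ((proj A (T d)).card : ℝ) ≤ ∏ e ∈ E, a e d ^ f e := by
      intro d hd
      have hdne : (T d).Nonempty := (Finset.mem_filter.mp hd).2
      exact ih (fun u hu => hcov u (Finset.mem_insert_of_mem hu)) (T d) hdne
    have hsplit : ∀ (g : Finset V → ℝ),
        ∏ e ∈ E, g e = (∏ e ∈ Ev, g e) * ∏ e ∈ E.filter (fun e => ¬ v ∈ e), g e := by
      intro g
      rw [hEv]
      exact (Finset.prod_filter_mul_prod_filter_not E _ g).symm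
    have hcovv : 1 ≤ ∑ e ∈ Ev, f e := hcov v (Finset.mem_insert_self v A)
    have hf0' : ∀ e ∈ Ev, 0 ≤ f e := fun e he => hf0 e (Finset.mem_of_mem_filter e he)
    calc ((proj (insert v A) S).card : ℝ)
        = ∑ d ∈ Dg, ((proj A (T d)).card : ℝ) := hLHS
      _ ≤ ∑ d ∈ Dg, ∏ e ∈ E, a e d ^ f e := Finset.sum_le_sum hIH
      _ ≤ ∑ d ∈ Dg, (∏ e ∈ Ev, a e d ^ f e) * ∏ e ∈ E.filter (fun e => ¬ v ∈ e), b e ^ f e := by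
          refine Finset.sum_le_sum fun d _ => ?_
          rw [hsplit (fun e => a e d ^ f e)]
          refine mul_le_mul_of_nonneg_left ?_
            (Finset.prod_nonneg fun e _ => Real.rpow_nonneg (ha0 e d) _)
          refine Finset.prod_le_prod (fun e _ => Real.rpow_nonneg (ha0 e d) _) ?_
          intro e he
          obtain ⟨heE, hvne⟩ := Finset.mem_filter.mp he
          exact Real.rpow_le_rpow (ha0 e d) (hnv e hvne d) (hf0 e heE)
      _ = (∏ e ∈ E.filter (fun e => ¬ v ∈ e), b e ^ f e) * ∑ d ∈ Dg, ∏ e ∈ Ev, a e d ^ f e := by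
          rw [Finset.mul_sum]
          exact Finset.sum_congr rfl fun d _ => mul_comm _ _
      _ ≤ (∏ e ∈ E.filter (fun e => ¬ v ∈ e), b e ^ f e) * ∏ e ∈ Ev, (∑ d ∈ Dg, a e d) ^ f e := by
          refine mul_le_mul_of_nonneg_left ?_
            (Finset.prod_nonneg fun e _ => Real.rpow_nonneg (hb0 e) _)
          exact holder_ge_one Ev Dg f a hf0' hcovv (fun e _ d _ => ha0 e d)
      _ = (∏ e ∈ E.filter (fun e => ¬ v ∈ e), b e ^ f e) * ∏ e ∈ Ev, b e ^ f e := by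
          congr 1
          refine Finset.prod_congr rfl fun e he => ?_
          rw [hv e (Finset.mem_filter.mp he).2]
      _ = ∏ e ∈ E, b e ^ f e := by rw [hsplit (fun e => b e ^ f e), mul_comm]

end Main

/-- **Shearer-type bound (AGM bound for projections).**
Let `H = (V, E)` be a hypergraph in which every hyperedge is nonempty and every
vertex belongs to at least one hyperedge, let `f` be a fractional edge cover of `H`,
let `D` be a finite set, and let `S` be a nonempty finite set of tuples `t : V → D`.
Then `|S| ≤ ∏_{e ∈ E} |π_e(S)|^{f(e)}`, where `π_e(S)` is the set of restrictions
of members of `S` to the coordinates in `e`. -/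
theorem shearer_projection_bound
    (V D : Type) [Fintype V] [DecidableEq V] [Fintype D] [DecidableEq D]
    (E : Finset (Finset V))
    (hEne : ∀ e ∈ E, e.Nonempty)
    (hcov : ∀ v : V, ∃ e ∈ E, v ∈ e)
    (f : Finset V → ℝ)
    (hf0 : ∀ e ∈ E, 0 ≤ f e)
    (hf1 : ∀ e ∈ E, f e ≤ 1)
    (hfcover : ∀ v : V, 1 ≤ ∑ e ∈ E.filter (fun e => v ∈ e), f e)
    (S : Finset (V → D)) (hS : S.Nonempty) :
    (S.card : ℝ) ≤
      ∏ e ∈ E, ((S.image (fun t => fun v : {x // x ∈ e} => t v)).card : ℝ) ^ f e := by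
  classical
  have h := shearer_aux E f hf0 Finset.univ (fun u _ => hfcover u) S hS
  have hcard : (proj Finset.univ S).card = S.card := by
    refine Finset.card_image_of_injective S ?_
    intro t1 t2 heq
    funext x
    exact congrFun heq ⟨x, Finset.mem_univ x⟩
  rw [hcard] at h
  refine le_trans h (le_of_eq ?_)
  refine Finset.prod_congr rfl fun e he => ?_
  rw [proj_card_congr (Finset.inter_univ e) S]
  rfl
end

section
/- Let H = (V, E) be a hypergraph in which every vertex belongs to at least one hyperedge, let f be a fractional edge cover of H, let D be a finite domain, and for each hyperedge e ∈ E let R_e be a finite set of functions e → D. Then the join (the set of all tuples t : V → D whose restriction to e belongs to R_e for every e ∈ E) has size at most ∏_{e ∈ E} |R_e|^{f(e)}. -/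
open scoped Classical

/-! Friedgut's inequality: for a fractional edge cover `f` and arbitrary weights `g e` on the
tuples over each edge `e`, `∑_t ∏_e g e (t|_e) ^ f e ≤ ∏_e (∑_s g e s) ^ f e`. Free the vertices
one at a time: when the sum over the value at `v` is taken, the factors of the edges missing `v`
are constant, and the edges containing `v` carry exponents summing to at least `1`, so Hölder's
inequality (after normalizing those exponents to sum `1`) bounds the sum. The AGM bound is the
case where `g e` is the indicator of `R e`. -/

open Finset Function
open scoped ENNReal

namespace ENNReal

theorem sum_prod_rpow_le_prod_sum_rpow_of_sum_eq_one {ι α : Type*} [Fintype α] (s : Finset ι)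
    (a : ι → α → ℝ≥0∞) {p : ι → ℝ} (hp0 : ∀ i ∈ s, 0 ≤ p i) (hp : ∑ i ∈ s, p i = 1) :
    ∑ x, ∏ i ∈ s, a i x ^ p i ≤ ∏ i ∈ s, (∑ x, a i x) ^ p i := by
  let _ : MeasurableSpace α := ⊤
  simpa [MeasureTheory.lintegral_count, tsum_fintype] using
    lintegral_prod_norm_pow_le (μ := (MeasureTheory.Measure.count : MeasureTheory.Measure α)) s
      (fun i _ => .of_discrete) hp hp0

theorem sum_prod_rpow_le_prod_sum_rpow {ι α : Type*} [Fintype α] (s : Finset ι)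
    (a : ι → α → ℝ≥0∞) {p : ι → ℝ} (hp0 : ∀ i ∈ s, 0 ≤ p i) (hp : 1 ≤ ∑ i ∈ s, p i) :
    ∑ x, ∏ i ∈ s, a i x ^ p i ≤ ∏ i ∈ s, (∑ x, a i x) ^ p i := by
  -- Normalize the exponents to `q = p / ∑ p`, which sum to one, and bound the surplus
  -- `a ^ (p - q)` by `(∑ a) ^ (p - q)`.
  set q : ι → ℝ := fun i => p i / ∑ j ∈ s, p j
  have hq0 : ∀ i ∈ s, 0 ≤ q i := fun i hi => div_nonneg (hp0 i hi) (by linarith)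
  have hqp : ∀ i ∈ s, 0 ≤ p i - q i := fun i hi => sub_nonneg.2 (div_le_self (hp0 i hi) hp)
  have hq : ∑ i ∈ s, q i = 1 := by rw [← sum_div, div_self (by linarith)]
  have hsplit : ∀ i ∈ s, ∀ b : ℝ≥0∞, b ^ p i = b ^ (p i - q i) * b ^ q i := fun i hi b => by
    rw [← rpow_add_of_nonneg _ _ (hqp i hi) (hq0 i hi), sub_add_cancel]
  set C := ∏ i ∈ s, (∑ x, a i x) ^ (p i - q i)
  calc ∑ x, ∏ i ∈ s, a i x ^ p i
      ≤ ∑ x, C * ∏ i ∈ s, a i x ^ q i := by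
        gcongr with x
        rw [← prod_mul_distrib]
        refine prod_le_prod' fun i hi => ?_
        rw [hsplit i hi]
        gcongr
        · exact hqp i hi
        · exact single_le_sum (fun _ _ => zero_le) (mem_univ x)
    _ = C * ∑ x, ∏ i ∈ s, a i x ^ q i := (mul_sum ..).symm
    _ ≤ C * ∏ i ∈ s, (∑ x, a i x) ^ q i := by
        gcongr
        exact sum_prod_rpow_le_prod_sum_rpow_of_sum_eq_one s a hq0 hq
    _ = ∏ i ∈ s, (∑ x, a i x) ^ p i := by
        rw [← prod_mul_distrib]
        exact prod_congr rfl fun i hi => (hsplit i hi _).symm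

theorem sum_prod_rpow_le_prod_rpow_of_sum_le {ι α : Type*} [Fintype α] (s : Finset ι)
    (P : ι → Prop) [DecidablePred P] (a : ι → α → ℝ≥0∞) (b : ι → ℝ≥0∞) {p : ι → ℝ}
    (hp0 : ∀ i ∈ s, 0 ≤ p i) (hp : 1 ≤ ∑ i ∈ s with P i, p i)
    (hsum : ∀ i ∈ s, P i → ∑ x, a i x ≤ b i) (hconst : ∀ i ∈ s, ¬ P i → ∀ x, a i x = b i) :
    ∑ x, ∏ i ∈ s, a i x ^ p i ≤ ∏ i ∈ s, b i ^ p i := by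
  set C := ∏ i ∈ s with ¬ P i, b i ^ p i
  have hfilter : ∀ i ∈ s.filter P, 0 ≤ p i := fun i hi => hp0 i (mem_filter.1 hi).1
  calc ∑ x, ∏ i ∈ s, a i x ^ p i
      = ∑ x, (∏ i ∈ s with P i, a i x ^ p i) * C := by
        refine sum_congr rfl fun x _ => ?_
        rw [← prod_filter_mul_prod_filter_not s P]
        congr 1
        exact prod_congr rfl fun i hi => by rw [hconst i (mem_filter.1 hi).1 (mem_filter.1 hi).2]
    _ = (∑ x, ∏ i ∈ s with P i, a i x ^ p i) * C := (sum_mul ..).symm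
    _ ≤ (∏ i ∈ s with P i, (∑ x, a i x) ^ p i) * C := by
        gcongr
        exact sum_prod_rpow_le_prod_sum_rpow _ a hfilter hp
    _ ≤ (∏ i ∈ s with P i, b i ^ p i) * C := by
        gcongr with i hi
        · exact hfilter i hi
        · exact hsum i (mem_filter.1 hi).1 (mem_filter.1 hi).2
    _ = ∏ i ∈ s, b i ^ p i := prod_filter_mul_prod_filter_not s P _

end ENNReal

section FixedOutside

variable {α D : Type*} [Fintype α] [DecidableEq α] [Fintype D]

/-- Tuples over `A`, encoded as total tuples padded with the background `t₀` outside `A`. -/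
noncomputable def fixedOutside (A : Set α) (t₀ : α → D) : Finset (α → D) :=
  univ.filter fun t => ∀ x ∉ A, t x = t₀ x

@[simp]
theorem mem_fixedOutside {A : Set α} {t₀ t : α → D} :
    t ∈ fixedOutside A t₀ ↔ ∀ x ∉ A, t x = t₀ x := by
  simp [fixedOutside]

@[simp]
theorem fixedOutside_empty (t₀ : α → D) : fixedOutside ∅ t₀ = {t₀} := by
  ext t
  simp [funext_iff]

@[simp]
theorem fixedOutside_univ (t₀ : α → D) : fixedOutside Set.univ t₀ = univ := by
  ext t
  simp

theorem filter_fixedOutside_insert_apply_eq {A : Set α} {v : α} (hv : v ∉ A)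
    (t₀ : α → D) (d : D) :
    {t ∈ fixedOutside (insert v A) t₀ | t v = d} = fixedOutside A (update t₀ v d) := by
  ext t
  simp only [mem_filter, mem_fixedOutside, Set.mem_insert_iff, not_or]
  constructor
  · rintro ⟨ht, rfl⟩ x hx
    rcases eq_or_ne x v with rfl | hxv
    · simp
    · rw [update_of_ne hxv]
      exact ht x ⟨hxv, hx⟩
  · intro ht
    refine ⟨fun x hx => ?_, by simpa using ht v hv⟩
    rw [ht x hx.2, update_of_ne hx.1]

theorem sum_fixedOutside_insert {M : Type*} [AddCommMonoid M] {A : Set α}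
    {v : α} (hv : v ∉ A) (t₀ : α → D) (h : (α → D) → M) :
    ∑ t ∈ fixedOutside (insert v A) t₀, h t = ∑ d, ∑ t ∈ fixedOutside A (update t₀ v d), h t := by
  rw [← sum_fiberwise _ (fun t => t v)]
  simp only [filter_fixedOutside_insert_apply_eq hv]

end FixedOutside

section Hypergraph

variable {V D : Type*} [DecidableEq V] [Fintype D]

structure IsFractionalEdgeCover (E : Finset (Finset V)) (f : Finset V → ℝ) : Prop where
  nonneg : ∀ e ∈ E, 0 ≤ f e
  one_le_sum : ∀ v, 1 ≤ ∑ e ∈ E with v ∈ e, f e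

theorem sum_fixedOutside_preimage_insert_of_mem {M : Type*} [AddCommMonoid M] {e : Finset V}
    {A : Set V} {v : V} (hv : v ∉ A) (he : v ∈ e) (t₀ : V → D) (h : (e → D) → M) :
    ∑ s ∈ fixedOutside (Subtype.val ⁻¹' insert v A) (fun x : e => t₀ x), h s =
      ∑ d, ∑ s ∈ fixedOutside (Subtype.val ⁻¹' A) (fun x : e => update t₀ v d x), h s := by
  have hpre : (Subtype.val ⁻¹' insert v A : Set e) = insert ⟨v, he⟩ (Subtype.val ⁻¹' A) := by
    ext x
    simp [Subtype.ext_iff]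
  simp only [hpre, sum_fixedOutside_insert (show ⟨v, he⟩ ∉ Subtype.val ⁻¹' A from hv),
    update_comp_eq_of_injective' t₀ Subtype.val_injective ⟨v, he⟩]

theorem fixedOutside_preimage_insert_of_notMem {e : Finset V} {A : Set V} {v : V} (he : v ∉ e)
    (t₀ : V → D) (d : D) :
    fixedOutside (Subtype.val ⁻¹' insert v A) (fun x : e => t₀ x) =
      fixedOutside (Subtype.val ⁻¹' A) (fun x : e => update t₀ v d x) := by
  have hne : ∀ x : e, (x : V) ≠ v := fun x hx => he (hx ▸ x.2)
  ext s
  simp [hne]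

variable [Fintype V] {E : Finset (Finset V)} {f : Finset V → ℝ}

theorem IsFractionalEdgeCover.sum_fixedOutside_prod_rpow_le (hf : IsFractionalEdgeCover E f)
    (g : (e : Finset V) → (e → D) → ℝ≥0∞) (A : Finset V) (t₀ : V → D) :
    ∑ t ∈ fixedOutside ↑A t₀, ∏ e ∈ E, g e (fun x => t x) ^ f e ≤
      ∏ e ∈ E, (∑ s ∈ fixedOutside (Subtype.val ⁻¹' ↑A) (fun x : e => t₀ x), g e s) ^ f e := by
  induction A using Finset.induction generalizing t₀ with
  | empty => simp
  | @insert v A hv ih =>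
    rw [coe_insert, sum_fixedOutside_insert hv]
    calc ∑ d, ∑ t ∈ fixedOutside ↑A (update t₀ v d), ∏ e ∈ E, g e (fun x => t x) ^ f e
        ≤ ∑ d, ∏ e ∈ E, (∑ s ∈ fixedOutside (Subtype.val ⁻¹' ↑A)
            (fun x : e => update t₀ v d x), g e s) ^ f e :=
          sum_le_sum fun d _ => ih (update t₀ v d)
      _ ≤ _ := by
          refine ENNReal.sum_prod_rpow_le_prod_rpow_of_sum_le E (v ∈ ·) _ _ hf.nonneg
            (hf.one_le_sum v) (fun e _ he => ?_) (fun e _ he d => ?_)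
          · rw [sum_fixedOutside_preimage_insert_of_mem hv he]
          · rw [fixedOutside_preimage_insert_of_notMem he t₀ d]

theorem IsFractionalEdgeCover.sum_prod_rpow_le (hf : IsFractionalEdgeCover E f)
    (g : (e : Finset V) → (e → D) → ℝ≥0∞) :
    ∑ t : V → D, ∏ e ∈ E, g e (fun x => t x) ^ f e ≤ ∏ e ∈ E, (∑ s, g e s) ^ f e := by
  rcases isEmpty_or_nonempty (V → D) with _ | ⟨⟨t₀⟩⟩
  · simp
  · simpa using hf.sum_fixedOutside_prod_rpow_le g univ t₀

def join [DecidableEq D] (E : Finset (Finset V)) (R : (e : Finset V) → Finset (e → D)) :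
    Finset (V → D) :=
  univ.filter fun t => ∀ e ∈ E, (fun x : e => t x) ∈ R e

theorem IsFractionalEdgeCover.card_join_le [DecidableEq D] (hf : IsFractionalEdgeCover E f)
    (R : (e : Finset V) → Finset (e → D)) :
    ((join E R).card : ℝ≥0∞) ≤ ∏ e ∈ E, ((R e).card : ℝ≥0∞) ^ f e := by
  have hind : ∀ e ∈ E, ∀ s : e → D,
      (if s ∈ R e then 1 else 0 : ℝ≥0∞) ≤ (if s ∈ R e then 1 else 0 : ℝ≥0∞) ^ f e := by
    -- only an inequality, because `0 ^ 0 = 1`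
    intro e _ s
    split_ifs <;> simp
  calc ((join E R).card : ℝ≥0∞)
      = ∑ t : V → D, ∏ e ∈ E, (if (fun x : e => t x) ∈ R e then 1 else 0 : ℝ≥0∞) := by
        simp only [join, card_filter, Nat.cast_sum, Nat.cast_ite, Nat.cast_one, Nat.cast_zero,
          prod_boole]
        congr!
    _ ≤ ∑ t : V → D, ∏ e ∈ E, (if (fun x : e => t x) ∈ R e then 1 else 0 : ℝ≥0∞) ^ f e := by
        gcongr with t _ e he
        exact hind e he _
    _ ≤ ∏ e ∈ E, (∑ s, if s ∈ R e then 1 else 0 : ℝ≥0∞) ^ f e :=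
        hf.sum_prod_rpow_le fun e s => if s ∈ R e then 1 else 0
    _ = ∏ e ∈ E, ((R e).card : ℝ≥0∞) ^ f e := by
        simp

end Hypergraph

theorem agm_join_bound_general
    (V D : Type) [Fintype V] [DecidableEq V] [Fintype D] [DecidableEq D]
    (E : Finset (Finset V))
    (f : Finset V → ℝ)
    (hf0 : ∀ e ∈ E, 0 ≤ f e)
    (hfcover : ∀ v : V, 1 ≤ ∑ e ∈ E.filter (fun e => v ∈ e), f e)
    (R : (e : Finset V) → Finset ({x // x ∈ e} → D)) :
    ((Finset.univ.filter
        (fun t : V → D => ∀ e ∈ E, (fun v : {x // x ∈ e} => t v) ∈ R e)).card : ℝ) ≤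
      ∏ e ∈ E, ((R e).card : ℝ) ^ f e := by
  have hbound := (IsFractionalEdgeCover.mk hf0 hfcover).card_join_le R
  have hfinite : ∏ e ∈ E, ((R e).card : ℝ≥0∞) ^ f e ≠ ⊤ :=
    ENNReal.prod_ne_top fun e he => ENNReal.rpow_ne_top_of_nonneg (hf0 e he) (by simp)
  simpa only [join, ENNReal.toReal_prod, ← ENNReal.toReal_rpow, ENNReal.toReal_natCast] using
    ENNReal.toReal_mono hfinite hbound

/-- **AGM bound (fractional edge cover bound on the join size).**
Let `H = (V, E)` be a hypergraph in which every hyperedge is nonempty and every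
vertex belongs to at least one hyperedge, let `f` be a fractional edge cover of `H`,
let `D` be a finite domain, and for each hyperedge `e ∈ E` let `R e` be a finite set
of functions `e → D`. Then the join (the set of all tuples `t : V → D` whose
restriction to `e` belongs to `R e` for every `e ∈ E`) has size at most
`∏_{e ∈ E} |R e|^{f(e)}`. -/
theorem agm_join_bound
    (V D : Type) [Fintype V] [DecidableEq V] [Fintype D] [DecidableEq D]
    (E : Finset (Finset V))
    (hEne : ∀ e ∈ E, e.Nonempty)
    (hcov : ∀ v : V, ∃ e ∈ E, v ∈ e)
    (f : Finset V → ℝ)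
    (hf0 : ∀ e ∈ E, 0 ≤ f e)
    (hf1 : ∀ e ∈ E, f e ≤ 1)
    (hfcover : ∀ v : V, 1 ≤ ∑ e ∈ E.filter (fun e => v ∈ e), f e)
    (R : (e : Finset V) → Finset ({x // x ∈ e} → D)) :
    ((Finset.univ.filter
        (fun t : V → D => ∀ e ∈ E, (fun v : {x // x ∈ e} => t v) ∈ R e)).card : ℝ) ≤
      ∏ e ∈ E, ((R e).card : ℝ) ^ f e :=
  agm_join_bound_general V D E f hf0 hfcover R
end

section
/- Let H = (V, E) be a hypergraph in which every vertex belongs to at least one hyperedge, let D be a finite domain, let N ≥ 1 be an integer, and for each hyperedge e ∈ E let R_e be a set of functions e → D with |R_e| ≤ N. Then the join (the set of all tuples t : V → D whose restriction to e belongs to R_e for every e ∈ E) has size at most N^{ρ*(H)}, where ρ*(H) is the fractional edge cover number of H. -/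
open scoped Classical
open Finset

/-- Generalized Hölder inequality: if the weights sum to at least 1, then
`∑_d ∏_i a_{i,d}^{w_i} ≤ ∏_i (∑_d a_{i,d})^{w_i}`. -/
lemma holder_aux {ι κ : Type*} (s : Finset ι) (T : Finset κ)
    (w : ι → ℝ) (a : ι → κ → ℝ)
    (hw : ∀ i ∈ s, 0 ≤ w i) (hs : 1 ≤ ∑ i ∈ s, w i)
    (ha : ∀ i ∈ s, ∀ d ∈ T, 0 ≤ a i d) :
    ∑ d ∈ T, ∏ i ∈ s, a i d ^ w i ≤ ∏ i ∈ s, (∑ d ∈ T, a i d) ^ w i := by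
  classical
  set s' : Finset ι := s.filter (fun i => w i ≠ 0) with hs'
  have hsub : s' ⊆ s := filter_subset _ _
  have hprod : ∀ z : ι → ℝ, ∏ i ∈ s', z i ^ w i = ∏ i ∈ s, z i ^ w i := by
    intro z
    refine prod_filter_of_ne ?_
    intro i _ hne
    intro h0
    exact hne (by rw [h0, Real.rpow_zero])
  have hsum : ∑ i ∈ s', w i = ∑ i ∈ s, w i := by
    refine sum_filter_of_ne ?_
    intro i _ hne h0
    exact hne h0
  have hW : 1 ≤ ∑ i ∈ s', w i := by rw [hsum]; exact hs
  set W := ∑ i ∈ s', w i with hWdef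
  have hW0 : 0 < W := lt_of_lt_of_le one_pos hW
  have hwpos : ∀ i ∈ s', 0 < w i := by
    intro i hi
    rcases mem_filter.mp hi with ⟨his, hne⟩
    exact lt_of_le_of_ne (hw i his) (Ne.symm hne)
  -- rewrite both sides to range over s'
  rw [← hprod (fun i => ∑ d ∈ T, a i d)]
  have hLHS : ∀ d ∈ T, ∏ i ∈ s, a i d ^ w i = ∏ i ∈ s', a i d ^ w i := by
    intro d _; rw [hprod]
  rw [sum_congr rfl hLHS]
  set A : ι → ℝ := fun i => ∑ d ∈ T, a i d with hA
  by_cases hz : ∃ i ∈ s', A i = 0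
  · rcases hz with ⟨i, hi, hAi⟩
    have hia : ∀ d ∈ T, a i d = 0 := by
      intro d hd
      have := (Finset.sum_eq_zero_iff_of_nonneg (fun d hd => ha i (hsub hi) d hd)).mp hAi
      exact this d hd
    have hL : ∀ d ∈ T, ∏ j ∈ s', a j d ^ w j = 0 := by
      intro d hd
      refine prod_eq_zero hi ?_
      rw [hia d hd, Real.zero_rpow (ne_of_gt (hwpos i hi))]
    rw [sum_congr rfl hL, Finset.sum_const, smul_zero]
    refine prod_nonneg ?_
    intro j hj
    exact Real.rpow_nonneg (sum_nonneg fun d hd => ha j (hsub hj) d hd) _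
  · push_neg at hz
    have hApos : ∀ i ∈ s', 0 < A i := by
      intro i hi
      exact lt_of_le_of_ne (sum_nonneg fun d hd => ha i (hsub hi) d hd) (Ne.symm (hz i hi))
    set x : κ → ℝ := fun d => ∑ i ∈ s', (w i / W) * (a i d / A i) with hx
    have hx_nonneg : ∀ d ∈ T, 0 ≤ x d := by
      intro d hd
      exact sum_nonneg fun i hi => mul_nonneg (div_nonneg (hw i (hsub hi)) hW0.le)
        (div_nonneg (ha i (hsub hi) d hd) (hApos i hi).le)
    have hx_le_one : ∀ d ∈ T, x d ≤ 1 := by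
      intro d hd
      have : ∀ i ∈ s', (w i / W) * (a i d / A i) ≤ w i / W := by
        intro i hi
        have hle : a i d ≤ A i := Finset.single_le_sum
          (fun e he => ha i (hsub hi) e he) hd
        have : a i d / A i ≤ 1 := (div_le_one (hApos i hi)).mpr hle
        calc (w i / W) * (a i d / A i) ≤ (w i / W) * 1 :=
              mul_le_mul_of_nonneg_left this (div_nonneg (hw i (hsub hi)) hW0.le)
          _ = w i / W := mul_one _
      calc x d ≤ ∑ i ∈ s', w i / W := sum_le_sum this
        _ = W / W := by rw [← sum_div]
        _ = 1 := div_self hW0.ne'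
    have hsum_x : ∑ d ∈ T, x d = 1 := by
      rw [hx]
      rw [Finset.sum_comm]
      have : ∀ i ∈ s', ∑ d ∈ T, (w i / W) * (a i d / A i) = w i / W := by
        intro i hi
        rw [← Finset.mul_sum, ← Finset.sum_div]
        show w i / W * (A i / A i) = w i / W
        rw [div_self (hApos i hi).ne', mul_one]
      rw [sum_congr rfl this, ← sum_div, ← hWdef, div_self hW0.ne']
    have key : ∀ d ∈ T, ∏ i ∈ s', a i d ^ w i ≤ (∏ i ∈ s', A i ^ w i) * x d ^ W := by
      intro d hd
      have step1 : ∏ i ∈ s', a i d ^ w i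
          = (∏ i ∈ s', A i ^ w i) * ∏ i ∈ s', (a i d / A i) ^ w i := by
        rw [← prod_mul_distrib]
        refine prod_congr rfl ?_
        intro i hi
        rw [← Real.mul_rpow (hApos i hi).le
          (div_nonneg (ha i (hsub hi) d hd) (hApos i hi).le),
          mul_div_cancel₀ _ (hApos i hi).ne']
      rw [step1]
      refine mul_le_mul_of_nonneg_left ?_
        (prod_nonneg fun i hi => Real.rpow_nonneg (hApos i hi).le _)
      -- ∏ (a/A)^{w i} = (∏ (a/A)^{w i / W})^W ≤ (∑ (w i/W)(a/A))^W = x d ^ W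
      have step2 : ∏ i ∈ s', (a i d / A i) ^ w i
          = (∏ i ∈ s', (a i d / A i) ^ (w i / W)) ^ W := by
        rw [← Real.finset_prod_rpow s' _ (fun i hi =>
          Real.rpow_nonneg (div_nonneg (ha i (hsub hi) d hd) (hApos i hi).le) _) W]
        refine prod_congr rfl ?_
        intro i hi
        rw [← Real.rpow_mul (div_nonneg (ha i (hsub hi) d hd) (hApos i hi).le),
          div_mul_cancel₀ _ hW0.ne']
      rw [step2]
      have amgm : ∏ i ∈ s', (a i d / A i) ^ (w i / W) ≤ x d := by
        refine Real.geom_mean_le_arith_mean_weighted s' _ _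
          (fun i hi => div_nonneg (hw i (hsub hi)) hW0.le) ?_
          (fun i hi => div_nonneg (ha i (hsub hi) d hd) (hApos i hi).le)
        rw [← sum_div, ← hWdef, div_self hW0.ne']
      refine Real.rpow_le_rpow (prod_nonneg fun i hi =>
        Real.rpow_nonneg (div_nonneg (ha i (hsub hi) d hd) (hApos i hi).le) _) amgm hW0.le
    calc ∑ d ∈ T, ∏ i ∈ s', a i d ^ w i
        ≤ ∑ d ∈ T, (∏ i ∈ s', A i ^ w i) * x d ^ W := sum_le_sum key
      _ = (∏ i ∈ s', A i ^ w i) * ∑ d ∈ T, x d ^ W := by rw [← mul_sum]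
      _ ≤ (∏ i ∈ s', A i ^ w i) * 1 := by
          refine mul_le_mul_of_nonneg_left ?_
            (prod_nonneg fun i hi => Real.rpow_nonneg (hApos i hi).le _)
          rw [← hsum_x]
          refine sum_le_sum ?_
          intro d hd
          rcases eq_or_lt_of_le (hx_nonneg d hd) with h0 | h0
          · rw [← h0, Real.zero_rpow hW0.ne']
          · calc x d ^ W ≤ x d ^ (1 : ℝ) :=
                Real.rpow_le_rpow_of_exponent_ge h0 (hx_le_one d hd) hW
              _ = x d := Real.rpow_one _
      _ = ∏ i ∈ s', A i ^ w i := mul_one _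

/-- Main inductive AGM-type bound: the number of join tuples that are pinned to `t0`
outside `A` is at most `∏_e |R_e|^{f e}`, provided `f` is nonnegative and fractionally
covers every vertex of `A`. -/
lemma agm_main {V D : Type} [Fintype V] [DecidableEq V] [Fintype D] [DecidableEq D]
    (E : Finset (Finset V)) (f : Finset V → ℝ)
    (hf0 : ∀ e ∈ E, 0 ≤ f e)
    (A : Finset V) :
    (∀ v ∈ A, 1 ≤ ∑ e ∈ E.filter (fun e => v ∈ e), f e) →
    ∀ (R : (e : Finset V) → Finset ({x // x ∈ e} → D)) (t0 : V → D),
    ((Finset.univ.filter (fun t : V → D =>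
        (∀ e ∈ E, (fun v : {x // x ∈ e} => t v) ∈ R e) ∧ ∀ v ∉ A, t v = t0 v)).card : ℝ)
      ≤ ∏ e ∈ E, ((R e).card : ℝ) ^ f e := by
  induction A using Finset.induction_on with
  | empty =>
    intro _ R t0
    by_cases ht0 : ∀ e ∈ E, (fun v : {x // x ∈ e} => t0 v) ∈ R e
    · have hsub : (Finset.univ.filter (fun t : V → D =>
          (∀ e ∈ E, (fun v : {x // x ∈ e} => t v) ∈ R e) ∧ ∀ v ∉ (∅ : Finset V), t v = t0 v))
          ⊆ {t0} := by
        intro t ht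
        rcases Finset.mem_filter.mp ht with ⟨-, -, hpin⟩
        simp only [Finset.mem_singleton]
        funext v
        exact hpin v (Finset.notMem_empty v)
      have h1 : ((Finset.univ.filter (fun t : V → D =>
          (∀ e ∈ E, (fun v : {x // x ∈ e} => t v) ∈ R e) ∧ ∀ v ∉ (∅ : Finset V), t v = t0 v)).card
          : ℝ) ≤ 1 := by
        have := Finset.card_le_card hsub
        simp only [Finset.card_singleton] at this
        exact_mod_cast this
      refine h1.trans ?_
      calc (1:ℝ) = ∏ _e ∈ E, (1:ℝ) := (Finset.prod_const_one).symm
        _ ≤ ∏ e ∈ E, ((R e).card : ℝ) ^ f e := by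
            refine Finset.prod_le_prod (fun _ _ => by norm_num) ?_
            intro e he
            have hne : 0 < (R e).card := Finset.card_pos.mpr ⟨_, ht0 e he⟩
            have h2 : (1 : ℝ) ≤ ((R e).card : ℝ) := by exact_mod_cast hne
            calc (1:ℝ) = (1:ℝ) ^ f e := (Real.one_rpow _).symm
              _ ≤ ((R e).card : ℝ) ^ f e := Real.rpow_le_rpow (by norm_num) h2 (hf0 e he)
    · have hempty : (Finset.univ.filter (fun t : V → D =>
          (∀ e ∈ E, (fun v : {x // x ∈ e} => t v) ∈ R e) ∧ ∀ v ∉ (∅ : Finset V), t v = t0 v))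
          = ∅ := by
        refine Finset.filter_eq_empty_iff.mpr ?_
        intro t _ ⟨hjoin, hpin⟩
        have : t = t0 := funext fun v => hpin v (Finset.notMem_empty v)
        exact ht0 (this ▸ hjoin)
      rw [hempty]
      simp only [Finset.card_empty, Nat.cast_zero]
      exact Finset.prod_nonneg fun e he => Real.rpow_nonneg (Nat.cast_nonneg _) _
  | @insert v A' hvA' IH =>
    intro hcov R t0
    set R' : D → (e : Finset V) → Finset ({x // x ∈ e} → D) :=
      fun d e => (R e).filter (fun r => ∀ h : v ∈ e, r ⟨v, h⟩ = d) with hR'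
    set S := Finset.univ.filter (fun t : V → D =>
        (∀ e ∈ E, (fun w : {x // x ∈ e} => t w) ∈ R e) ∧ ∀ w ∉ insert v A', t w = t0 w) with hS
    -- fiberwise decomposition over the value at v
    have hfib : S.card = ∑ d ∈ (Finset.univ : Finset D), (S.filter (fun t => t v = d)).card :=
      Finset.card_eq_sum_card_fiberwise (fun t _ => Finset.mem_univ (t v))
    have hfiber_eq : ∀ d : D, S.filter (fun t => t v = d) =
        Finset.univ.filter (fun t : V → D =>
          (∀ e ∈ E, (fun w : {x // x ∈ e} => t w) ∈ R' d e) ∧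
          ∀ w ∉ A', t w = Function.update t0 v d w) := by
      intro d
      ext t
      simp only [hS, Finset.mem_filter, Finset.mem_univ, true_and]
      constructor
      · rintro ⟨⟨hjoin, hpin⟩, htv⟩
        refine ⟨?_, ?_⟩
        · intro e he
          refine Finset.mem_filter.mpr ⟨hjoin e he, ?_⟩
          intro h
          simpa using htv
        · intro w hw
          by_cases hwv : w = v
          · subst hwv
            rw [Function.update_self]
            exact htv
          · rw [Function.update_of_ne hwv]
            exact hpin w (by simp [hwv, hw])
      · rintro ⟨hjoin, hpin⟩
        have htv : t v = d := by
          have := hpin v hvA'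
          rwa [Function.update_self] at this
        refine ⟨⟨?_, ?_⟩, htv⟩
        · intro e he
          exact Finset.mem_of_mem_filter _ (hjoin e he)
        · intro w hw
          have hwv : w ≠ v := fun h => hw (h ▸ Finset.mem_insert_self v A')
          have hwA' : w ∉ A' := fun h => hw (Finset.mem_insert_of_mem h)
          have := hpin w hwA'
          rwa [Function.update_of_ne hwv] at this
    -- apply IH to each fiber
    have hIH : ∀ d : D, ((S.filter (fun t => t v = d)).card : ℝ)
        ≤ ∏ e ∈ E, ((R' d e).card : ℝ) ^ f e := by
      intro d
      rw [hfiber_eq d]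
      exact IH (fun w hw => hcov w (Finset.mem_insert_of_mem hw)) (R' d)
        (Function.update t0 v d)
    have hcast : (S.card : ℝ) = ∑ d ∈ (Finset.univ : Finset D),
        ((S.filter (fun t => t v = d)).card : ℝ) := by
      rw [hfib]; push_cast; ring
    -- split each product over edges containing v and not
    have hsplit : ∀ d : D, ∏ e ∈ E, ((R' d e).card : ℝ) ^ f e
        = (∏ e ∈ E.filter (fun e => v ∈ e), ((R' d e).card : ℝ) ^ f e)
          * ∏ e ∈ E.filter (fun e => ¬ v ∈ e), ((R e).card : ℝ) ^ f e := by
      intro d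
      rw [← Finset.prod_filter_mul_prod_filter_not E (fun e => v ∈ e)]
      congr 1
      refine Finset.prod_congr rfl ?_
      intro e he
      have hve : v ∉ e := (Finset.mem_filter.mp he).2
      have : R' d e = R e := by
        refine Finset.filter_true_of_mem ?_
        intro r _ h
        exact absurd h hve
      rw [this]
    -- Hölder
    have hhold : ∑ d ∈ (Finset.univ : Finset D),
        ∏ e ∈ E.filter (fun e => v ∈ e), ((R' d e).card : ℝ) ^ f e
        ≤ ∏ e ∈ E.filter (fun e => v ∈ e),
            (∑ d ∈ (Finset.univ : Finset D), ((R' d e).card : ℝ)) ^ f e := by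
      refine holder_aux _ _ _ (fun e d => ((R' d e).card : ℝ))
        (fun e he => hf0 e (Finset.mem_of_mem_filter _ he))
        (hcov v (Finset.mem_insert_self v A'))
        (fun e _ d _ => Nat.cast_nonneg _)
    -- the fibers of R e over the value at v partition R e
    have hfibR : ∀ e ∈ E.filter (fun e => v ∈ e),
        ∑ d ∈ (Finset.univ : Finset D), ((R' d e).card : ℝ) = ((R e).card : ℝ) := by
      intro e he
      have hve : v ∈ e := (Finset.mem_filter.mp he).2
      have h1 : ∀ d : D, R' d e = (R e).filter (fun r => r ⟨v, hve⟩ = d) := by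
        intro d
        refine Finset.filter_congr ?_
        intro r _
        exact ⟨fun H => H hve, fun H h => H⟩
      have h2 : (R e).card = ∑ d ∈ (Finset.univ : Finset D),
          ((R e).filter (fun r => r ⟨v, hve⟩ = d)).card :=
        Finset.card_eq_sum_card_fiberwise (fun r _ => Finset.mem_univ _)
      rw [Finset.sum_congr rfl (fun d _ => by rw [h1 d])]
      rw [h2]; push_cast; ring
    calc (S.card : ℝ) = ∑ d ∈ (Finset.univ : Finset D),
          ((S.filter (fun t => t v = d)).card : ℝ) := hcast
      _ ≤ ∑ d ∈ (Finset.univ : Finset D), ∏ e ∈ E, ((R' d e).card : ℝ) ^ f e :=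
          Finset.sum_le_sum (fun d _ => hIH d)
      _ = (∑ d ∈ (Finset.univ : Finset D),
            ∏ e ∈ E.filter (fun e => v ∈ e), ((R' d e).card : ℝ) ^ f e)
          * ∏ e ∈ E.filter (fun e => ¬ v ∈ e), ((R e).card : ℝ) ^ f e := by
          rw [Finset.sum_congr rfl (fun d _ => hsplit d), ← Finset.sum_mul]
      _ ≤ (∏ e ∈ E.filter (fun e => v ∈ e),
            (∑ d ∈ (Finset.univ : Finset D), ((R' d e).card : ℝ)) ^ f e)
          * ∏ e ∈ E.filter (fun e => ¬ v ∈ e), ((R e).card : ℝ) ^ f e := by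
          refine mul_le_mul_of_nonneg_right hhold ?_
          exact Finset.prod_nonneg fun e _ => Real.rpow_nonneg (Nat.cast_nonneg _) _
      _ = (∏ e ∈ E.filter (fun e => v ∈ e), ((R e).card : ℝ) ^ f e)
          * ∏ e ∈ E.filter (fun e => ¬ v ∈ e), ((R e).card : ℝ) ^ f e := by
          congr 1
          exact Finset.prod_congr rfl (fun e he => by rw [hfibR e he])
      _ = ∏ e ∈ E, ((R e).card : ℝ) ^ f e :=
          Finset.prod_filter_mul_prod_filter_not E _ _

/-- **AGM upper bound in terms of the fractional edge cover number.**
Let `H = (V, E)` be a hypergraph in which every hyperedge is nonempty and every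
vertex belongs to at least one hyperedge, let `D` be a finite domain, let `N ≥ 1`
be an integer, and for each hyperedge `e ∈ E` let `R e` be a set of functions
`e → D` with `|R e| ≤ N`. Then the join has size at most `N ^ ρ*(H)`, where
`ρ*(H)` is the fractional edge cover number of `H` (the infimum of the weights of
fractional edge covers of `H`). -/
theorem agm_join_bound_cover_number
    (V D : Type) [Fintype V] [DecidableEq V] [Fintype D] [DecidableEq D]
    (E : Finset (Finset V))
    (hEne : ∀ e ∈ E, e.Nonempty)
    (hcov : ∀ v : V, ∃ e ∈ E, v ∈ e)
    (N : ℕ) (hN : 1 ≤ N)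
    (R : (e : Finset V) → Finset ({x // x ∈ e} → D))
    (hR : ∀ e ∈ E, (R e).card ≤ N) :
    ((Finset.univ.filter
        (fun t : V → D => ∀ e ∈ E, (fun v : {x // x ∈ e} => t v) ∈ R e)).card : ℝ) ≤
      (N : ℝ) ^ sInf {w : ℝ | ∃ f : Finset V → ℝ,
          (∀ e ∈ E, 0 ≤ f e) ∧ (∀ e ∈ E, f e ≤ 1) ∧
          (∀ v : V, 1 ≤ ∑ e ∈ E.filter (fun e => v ∈ e), f e) ∧
          w = ∑ e ∈ E, f e} := by
  set S : Set ℝ := {w : ℝ | ∃ f : Finset V → ℝ,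
      (∀ e ∈ E, 0 ≤ f e) ∧ (∀ e ∈ E, f e ≤ 1) ∧
      (∀ v : V, 1 ≤ ∑ e ∈ E.filter (fun e => v ∈ e), f e) ∧
      w = ∑ e ∈ E, f e} with hSdef
  set J := (Finset.univ.filter
      (fun t : V → D => ∀ e ∈ E, (fun v : {x // x ∈ e} => t v) ∈ R e)).card with hJ
  have hNpos : (0:ℝ) < (N:ℝ) := by exact_mod_cast Nat.lt_of_lt_of_le Nat.zero_lt_one hN
  have hN1 : (1:ℝ) ≤ (N:ℝ) := by exact_mod_cast hN
  -- S is nonempty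
  have hSne : S.Nonempty := by
    refine ⟨(E.card : ℝ), fun _ => 1, fun _ _ => zero_le_one, fun _ _ => le_refl 1, ?_, ?_⟩
    · intro v
      obtain ⟨e, he, hve⟩ := hcov v
      have hne : 0 < (E.filter (fun e => v ∈ e)).card :=
        Finset.card_pos.mpr ⟨e, Finset.mem_filter.mpr ⟨he, hve⟩⟩
      rw [Finset.sum_const, nsmul_eq_mul, mul_one]
      exact_mod_cast hne
    · rw [Finset.sum_const, nsmul_eq_mul, mul_one]
  -- S is bounded below by 0
  have hSbdd : BddBelow S := by
    refine ⟨0, ?_⟩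
    rintro w ⟨f, hf0, -, -, rfl⟩
    exact Finset.sum_nonneg hf0
  -- the key pointwise bound
  have key : ∀ w ∈ S, (J : ℝ) ≤ (N:ℝ) ^ w := by
    rintro w ⟨f, hf0, hf1, hfc, rfl⟩
    by_cases hVD : Nonempty (V → D)
    · obtain ⟨t0⟩ := hVD
      have heq : (Finset.univ.filter
          (fun t : V → D => ∀ e ∈ E, (fun v : {x // x ∈ e} => t v) ∈ R e))
          = Finset.univ.filter (fun t : V → D =>
            (∀ e ∈ E, (fun v : {x // x ∈ e} => t v) ∈ R e) ∧
            ∀ v ∉ (Finset.univ : Finset V), t v = t0 v) := by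
        ext t
        simp
      calc (J : ℝ) ≤ ∏ e ∈ E, ((R e).card : ℝ) ^ f e := by
            rw [hJ, heq]
            exact agm_main E f hf0 Finset.univ (fun v _ => hfc v) R t0
        _ ≤ ∏ e ∈ E, (N : ℝ) ^ f e := by
            refine Finset.prod_le_prod
              (fun e _ => Real.rpow_nonneg (Nat.cast_nonneg _) _) ?_
            intro e he
            refine Real.rpow_le_rpow (Nat.cast_nonneg _) ?_ (hf0 e he)
            exact_mod_cast hR e he
        _ = (N : ℝ) ^ (∑ e ∈ E, f e) := (Real.rpow_sum_of_pos hNpos f E).symm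
    · have hempty : IsEmpty (V → D) := not_nonempty_iff.mp hVD
      have : J = 0 := by
        rw [hJ]
        simp [Finset.univ_eq_empty]
      rw [this]
      exact_mod_cast Real.rpow_nonneg hNpos.le _
  -- conclude by approaching the infimum
  by_contra hlt
  push_neg at hlt
  have hJpos : (0:ℝ) < (J : ℝ) := lt_trans (Real.rpow_pos_of_pos hNpos _) hlt
  rcases eq_or_lt_of_le hN1 with h1 | h1
  · obtain ⟨w₀, hw₀⟩ := hSne
    have h2 := key w₀ hw₀
    rw [← h1, Real.one_rpow] at h2
    rw [← h1, Real.one_rpow] at hlt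
    linarith
  · have hρ : sInf S < Real.logb N J := (Real.lt_logb_iff_rpow_lt h1 hJpos).mpr hlt
    obtain ⟨w₀, hw₀S, hw₀lt⟩ := (csInf_lt_iff hSbdd hSne).mp hρ
    have h2 := key w₀ hw₀S
    have h3 : (N:ℝ) ^ w₀ < (N:ℝ) ^ (Real.logb N J) :=
      Real.rpow_lt_rpow_of_exponent_lt h1 hw₀lt
    rw [Real.rpow_logb hNpos (by linarith) hJpos] at h3
    linarith
end

section
/- Let H = (V, E) be a hypergraph in which every vertex belongs to at least one hyperedge. Then for infinitely many positive integers N there exist a finite domain D_N and, for each hyperedge e ∈ E, a relation R_e ⊆ (e → D_N) with |R_e| ≤ N, such that the join (the set of all tuples t : V → D_N whose restriction to e belongs to R_e for every e ∈ E) has size at least N^{ρ*(H)}, where ρ*(H) is the fractional edge cover number of H. -/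
/-!
By LP duality, which holds over `ℚ` as Farkas' lemma holds over every linearly ordered field,
there is a rational fractional vertex packing `y` (that is, `y ≥ 0` and `∑ v ∈ e, y v ≤ 1` for
every edge) of weight at least `ρ*(H)`. Write `y = a / q` with `a` integral and take `N = n ^ q`.
Give each vertex `v` a range of `n ^ a v` values and let `R e` be the product of the ranges of the
vertices of `e`, of size `n ^ (∑ v ∈ e, a v) ≤ N`. The join contains the product of all ranges,
of size `n ^ (∑ v, a v) = N ^ (∑ v, y v) ≥ N ^ ρ*(H)`.
-/

open Finset Matrix

theorem exists_nonneg_sum_smul_eq_of_forall_dual_nonneg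
    {𝕜 M ι : Type*} [Field 𝕜] [LinearOrder 𝕜] [IsStrictOrderedRing 𝕜]
    [AddCommGroup M] [Module 𝕜 M] (s : Finset ι) (a : ι → M) (b : M)
    (h : ∀ φ : Module.Dual 𝕜 M, (∀ i ∈ s, 0 ≤ φ (a i)) → 0 ≤ φ b) :
    ∃ c : ι → 𝕜, 0 ≤ c ∧ ∑ i ∈ s, c i • a i = b := by
  classical
  induction s using Finset.induction_on generalizing a b with
  | empty =>
    have hb : b = 0 := (Module.forall_dual_apply_eq_zero_iff 𝕜 b).1 fun φ =>
      le_antisymm (by simpa using h (-φ) (by simp)) (h φ (by simp))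
    exact ⟨0, le_rfl, by simp [hb]⟩
  | insert j s hj ih =>
    suffices ∃ c : ι → 𝕜, 0 ≤ c ∧ ∃ μ : 𝕜, 0 ≤ μ ∧ μ • a j + ∑ i ∈ s, c i • a i = b by
      obtain ⟨c, hc, μ, hμ, rfl⟩ := this
      refine ⟨Function.update c j μ, fun i => ?_, ?_⟩
      · rcases eq_or_ne i j with rfl | hij
        · simpa using hμ
        · simpa [hij] using hc i
      · rw [sum_insert hj, Function.update_self]
        congr 1
        exact sum_congr rfl fun i hi => by rw [Function.update_of_ne (ne_of_mem_of_not_mem hi hj)]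
    by_cases hs : ∀ φ : Module.Dual 𝕜 M, (∀ i ∈ s, 0 ≤ φ (a i)) → 0 ≤ φ b
    · obtain ⟨c, hc, hcb⟩ := ih a b hs
      exact ⟨c, hc, 0, le_rfl, by simp [hcb]⟩
    push Not at hs
    obtain ⟨φ₀, hφ₀s, hφ₀b⟩ := hs
    have hα : φ₀ (a j) < 0 := by
      by_contra! hα
      exact hφ₀b.not_ge (h φ₀ (forall_mem_insert _ _ _ |>.2 ⟨hα, hφ₀s⟩))
    -- Projecting along `a j` onto `ker φ₀` removes `a j` and lets the induction hypothesis apply.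
    set π : M →ₗ[𝕜] M := LinearMap.id - ((φ₀ (a j))⁻¹ • φ₀).smulRight (a j) with hπ
    have hπ_apply : ∀ x, x = π x + (φ₀ x / φ₀ (a j)) • a j := fun x => by
      simp [hπ, div_eq_inv_mul]
    have hπa : π (a j) = 0 := by simp [hπ, hα.ne]
    obtain ⟨c, hc, hcb⟩ := ih (π ∘ a) (π b) fun φ hφ => by
      simpa using h (φ ∘ₗ π) (forall_mem_insert _ _ _ |>.2 ⟨by simp [hπa], hφ⟩)
    set r := b - ∑ i ∈ s, c i • a i
    have hr : π r = 0 := by simp [r, map_sum, ← hcb]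
    refine ⟨c, hc, φ₀ r / φ₀ (a j), div_nonneg_of_nonpos ?_ hα.le, ?_⟩
    · have : 0 ≤ ∑ i ∈ s, c i * φ₀ (a i) := sum_nonneg fun i hi => mul_nonneg (hc i) (hφ₀s i hi)
      simp only [r, map_sub, map_sum, map_smul, smul_eq_mul]
      linarith
    · have hr' : (φ₀ r / φ₀ (a j)) • a j = r := by simpa [hr] using (hπ_apply r).symm
      rw [hr', sub_add_cancel]

section LinearProgramming

variable {𝕜 m n : Type*} [Field 𝕜] [LinearOrder 𝕜] [IsStrictOrderedRing 𝕜]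
  [Fintype m] [Fintype n]

theorem Matrix.exists_nonneg_mulVec_le_of_forall (A : Matrix m n 𝕜) (b : m → 𝕜)
    (h : ∀ y, 0 ≤ y → 0 ≤ y ᵥ* A → 0 ≤ y ⬝ᵥ b) : ∃ x, 0 ≤ x ∧ A *ᵥ x ≤ b := by
  classical
  obtain ⟨c, hc, hcb⟩ := exists_nonneg_sum_smul_eq_of_forall_dual_nonneg univ
    (Sum.elim (fun j => Aᵀ j) fun i => Pi.single i 1) b fun φ hφ => by
      obtain ⟨y, rfl⟩ := (dotProductEquiv 𝕜 m).surjective φ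
      refine h y (fun i => ?_) (fun j => ?_)
      · simpa using hφ (.inr i) (mem_univ _)
      · simpa [vecMul, dotProduct, mul_comm] using hφ (.inl j) (mem_univ _)
  have hslack : A *ᵥ (c ∘ Sum.inl) + c ∘ Sum.inr = b := by
    ext i
    simpa [Fintype.sum_sum_type, mulVec, dotProduct, Pi.single_apply, mul_comm] using congrFun hcb i
  exact ⟨c ∘ Sum.inl, fun j => hc _, hslack ▸ le_add_of_nonneg_right fun i => hc _⟩

theorem Matrix.dotProduct_le_dotProduct_of_feasible {A : Matrix m n 𝕜} {b : m → 𝕜} {c : n → 𝕜}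
    {x : n → 𝕜} {y : m → 𝕜} (hx : 0 ≤ x) (hAx : A *ᵥ x ≤ b) (hy : 0 ≤ y) (hyA : c ≤ y ᵥ* A) :
    c ⬝ᵥ x ≤ y ⬝ᵥ b :=
  calc c ⬝ᵥ x ≤ (y ᵥ* A) ⬝ᵥ x := dotProduct_le_dotProduct_of_nonneg_right hyA hx
    _ = y ⬝ᵥ (A *ᵥ x) := (dotProduct_mulVec y A x).symm
    _ ≤ y ⬝ᵥ b := dotProduct_le_dotProduct_of_nonneg_left hAx hy

theorem Matrix.dotProduct_le_dotProduct_of_smul_feasible {A : Matrix m n 𝕜} {b : m → 𝕜}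
    {c : n → 𝕜} {x₀ : n → 𝕜} {y₀ : m → 𝕜} (hx₀ : 0 ≤ x₀) (hAx₀ : A *ᵥ x₀ ≤ b) (hy₀ : 0 ≤ y₀)
    (hy₀A : c ≤ y₀ ᵥ* A) {u : m → 𝕜} {v : n → 𝕜} {t : 𝕜} (hu : 0 ≤ u) (hv : 0 ≤ v) (ht : 0 ≤ t)
    (hvb : A *ᵥ v ≤ t • b) (huc : t • c ≤ u ᵥ* A) :
    c ⬝ᵥ v ≤ u ⬝ᵥ b := by
  rcases ht.eq_or_lt with rfl | ht
  · rw [zero_smul] at hvb huc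
    calc c ⬝ᵥ v ≤ y₀ ⬝ᵥ 0 := dotProduct_le_dotProduct_of_feasible hv hvb hy₀ hy₀A
      _ = 0 ⬝ᵥ x₀ := by simp
      _ ≤ u ⬝ᵥ b := dotProduct_le_dotProduct_of_feasible hx₀ hAx₀ hu huc
  · have := dotProduct_le_dotProduct_of_feasible hv hvb hu huc
    rw [smul_dotProduct, dotProduct_smul, smul_eq_mul, smul_eq_mul] at this
    exact le_of_mul_le_mul_left this ht

theorem Matrix.exists_feasible_dotProduct_le (A : Matrix m n 𝕜) (b : m → 𝕜) (c : n → 𝕜)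
    (hP : ∃ x, 0 ≤ x ∧ A *ᵥ x ≤ b) (hD : ∃ y, 0 ≤ y ∧ c ≤ y ᵥ* A) :
    ∃ x y, 0 ≤ x ∧ A *ᵥ x ≤ b ∧ 0 ≤ y ∧ c ≤ y ᵥ* A ∧ y ⬝ᵥ b ≤ c ⬝ᵥ x := by
  obtain ⟨x₀, hx₀, hAx₀⟩ := hP
  obtain ⟨y₀, hy₀, hy₀A⟩ := hD
  -- For `z = (x, y)`, `K *ᵥ z ≤ (b, -c, 0)` says `A *ᵥ x ≤ b`, `c ≤ y ᵥ* A` and `y ⬝ᵥ b ≤ c ⬝ᵥ x`.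
  let K : Matrix ((m ⊕ n) ⊕ Unit) (n ⊕ m) 𝕜 :=
    fromRows (fromBlocks A 0 0 (-Aᵀ)) (replicateRow Unit (Sum.elim (-c) b))
  have hK : ∀ w, 0 ≤ w → 0 ≤ w ᵥ* K → 0 ≤ w ⬝ᵥ Sum.elim (Sum.elim b (-c)) 0 := by
    intro w hw hwK
    set u := w ∘ Sum.inl ∘ Sum.inl
    set v := w ∘ Sum.inl ∘ Sum.inr
    set t := w (.inr ())
    have hw' : w = Sum.elim (Sum.elim u v) fun _ => t := by ext ((i | j) | ⟨⟩) <;> rfl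
    rw [hw'] at hwK ⊢
    have hu : 0 ≤ u := fun i => hw _
    have hv : 0 ≤ v := fun j => hw _
    have hvb : A *ᵥ v ≤ t • b := fun i => by
      simpa [K, replicateRow, mulVec, vecMul, dotProduct, mul_comm] using hwK (.inr i)
    have huc : t • c ≤ u ᵥ* A := fun j => by
      simpa [K, replicateRow, vecMul, dotProduct] using hwK (.inl j)
    suffices c ⬝ᵥ v ≤ u ⬝ᵥ b by
      simp only [sumElim_dotProduct_sumElim, dotProduct_zero, add_zero, dotProduct_comm v,
        neg_dotProduct]
      linarith
    exact dotProduct_le_dotProduct_of_smul_feasible hx₀ hAx₀ hy₀ hy₀A hu hv (hw _) hvb huc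
  obtain ⟨z, hz, hKz⟩ := K.exists_nonneg_mulVec_le_of_forall _ hK
  have h1 := fun i => hKz (.inl (.inl i))
  have h2 := fun j => hKz (.inl (.inr j))
  have h3 := hKz (.inr ())
  simp only [K, fromRows_mulVec, fromBlocks_mulVec, zero_mulVec, add_zero, zero_add, neg_mulVec,
    mulVec_transpose, replicateRow_mulVec_eq_const, Sum.elim_inl, Sum.elim_inr, Pi.neg_apply,
    neg_le_neg_iff, Function.const_apply, Pi.zero_apply] at h1 h2 h3
  rw [← Sum.elim_comp_inl_inr z, sumElim_dotProduct_sumElim, neg_dotProduct] at h3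
  refine ⟨z ∘ Sum.inl, z ∘ Sum.inr, fun j => hz _, h1, fun i => hz _, h2, ?_⟩
  rw [dotProduct_comm]
  linarith

end LinearProgramming

theorem exists_pos_nat_mul_eq_natCast {ι : Type*} [Fintype ι] (y : ι → ℚ) (hy : 0 ≤ y) :
    ∃ q : ℕ, 0 < q ∧ ∃ a : ι → ℕ, ∀ i, (a i : ℚ) = q * y i := by
  refine ⟨∏ i, (y i).den, prod_pos fun i _ => (y i).pos,
    fun i => (∏ j, (y j).den) / (y i).den * (y i).num.toNat, fun i => ?_⟩
  obtain ⟨k, hk⟩ := dvd_prod_of_mem (fun j => (y j).den) (mem_univ i)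
  dsimp only
  rw [hk, Nat.mul_div_cancel_left k (y i).pos]
  have hnum : ((y i).num.toNat : ℚ) = (y i).num := by
    exact_mod_cast Int.toNat_of_nonneg (Rat.num_nonneg.2 (hy i))
  push_cast
  rw [hnum, mul_comm ((y i).den : ℚ), mul_assoc, Rat.den_mul_eq_num]

section Hypergraph

variable {V : Type*} [DecidableEq V]

noncomputable def fractionalEdgeCoverNumber (E : Finset (Finset V)) : ℝ :=
  sInf {w : ℝ | ∃ f : Finset V → ℝ,
    (∀ e ∈ E, 0 ≤ f e) ∧ (∀ e ∈ E, f e ≤ 1) ∧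
    (∀ v : V, 1 ≤ ∑ e ∈ E.filter (fun e => v ∈ e), f e) ∧
    w = ∑ e ∈ E, f e}

theorem fractionalEdgeCoverNumber_le_sum {E : Finset (Finset V)} (f : E → ℝ) (hf : 0 ≤ f)
    (hcover : ∀ v, 1 ≤ ∑ e : E with v ∈ e.1, f e) :
    fractionalEdgeCoverNumber E ≤ ∑ e, f e := by
  let g : Finset V → ℝ := fun e => if h : e ∈ E then min (f ⟨e, h⟩) 1 else 0
  calc fractionalEdgeCoverNumber E ≤ ∑ e ∈ E, g e :=
        csInf_le ⟨0, ?_⟩ ⟨g, fun e he => ?_, fun e he => ?_, fun v => ?_, rfl⟩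
    _ = ∑ e : E, min (f e) 1 := by rw [← sum_coe_sort E]; simp [g]
    _ ≤ ∑ e, f e := sum_le_sum fun e _ => min_le_left _ _
  · rintro w ⟨g, hg, -, -, rfl⟩
    exact sum_nonneg hg
  · simpa [g, he] using hf _
  · simp [g, he]
  · have hg : ∑ e ∈ E with v ∈ e, g e = ∑ e : E with v ∈ e.1, min (f e) 1 := by
      rw [sum_filter, sum_filter, ← sum_coe_sort E]
      simp [g]
    rw [hg]
    by_cases hbig : ∃ e : E, v ∈ e.1 ∧ 1 ≤ f e
    · obtain ⟨e, hve, he⟩ := hbig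
      calc (1 : ℝ) = min (f e) 1 := (min_eq_right he).symm
        _ ≤ _ := single_le_sum (f := fun e => min (f e) 1) (fun e _ => le_min (hf e) zero_le_one)
              (by simpa using hve)
    · push Not at hbig
      rw [sum_congr rfl fun e he => min_eq_left (hbig e (by simpa using he)).le]
      exact hcover v

def incidenceMatrix (E : Finset (Finset V)) : Matrix E V ℚ :=
  Matrix.of fun e v => if v ∈ e.1 then 1 else 0

theorem vecMul_incidenceMatrix_apply (E : Finset (Finset V)) (f : E → ℚ) (v : V) :
    (f ᵥ* incidenceMatrix E) v = ∑ e : E with v ∈ e.1, f e := by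
  simp [incidenceMatrix, vecMul, dotProduct, sum_filter]

variable [Fintype V]

theorem incidenceMatrix_mulVec_apply (E : Finset (Finset V)) (y : V → ℚ) (e : E) :
    (incidenceMatrix E *ᵥ y) e = ∑ v ∈ e.1, y v := by
  simp [incidenceMatrix, mulVec, dotProduct]

theorem exists_fractionalPacking_fractionalEdgeCoverNumber_le (E : Finset (Finset V))
    (hcov : ∀ v : V, ∃ e ∈ E, v ∈ e) :
    ∃ y : V → ℚ, 0 ≤ y ∧ (∀ e ∈ E, ∑ v ∈ e, y v ≤ 1) ∧
      fractionalEdgeCoverNumber E ≤ ∑ v, (y v : ℝ) := by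
  have hone : 1 ≤ 1 ᵥ* incidenceMatrix E := fun v => by
    obtain ⟨e, he, hv⟩ := hcov v
    rw [vecMul_incidenceMatrix_apply]
    simp only [Pi.one_apply, sum_const, nsmul_eq_mul, mul_one, Nat.one_le_cast, one_le_card]
    exact ⟨⟨e, he⟩, by simpa using hv⟩
  obtain ⟨y, f, hy, hpack, hf, hcover, hfy⟩ :=
    (incidenceMatrix E).exists_feasible_dotProduct_le 1 1 ⟨0, le_rfl, by simp⟩
      ⟨1, zero_le_one, hone⟩
  refine ⟨y, hy, fun e he => by simpa [incidenceMatrix_mulVec_apply] using hpack ⟨e, he⟩, ?_⟩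
  calc fractionalEdgeCoverNumber E ≤ ∑ e, (f e : ℝ) :=
        fractionalEdgeCoverNumber_le_sum _ (fun e => Rat.cast_nonneg.2 (hf e)) fun v => by
          exact_mod_cast (vecMul_incidenceMatrix_apply E f v ▸ hcover v)
    _ ≤ ∑ v, (y v : ℝ) := by
        rw [dotProduct_one, one_dotProduct] at hfy
        exact_mod_cast hfy

theorem exists_natPacking_fractionalEdgeCoverNumber_le_div (E : Finset (Finset V))
    (hcov : ∀ v : V, ∃ e ∈ E, v ∈ e) :
    ∃ q : ℕ, 0 < q ∧ ∃ a : V → ℕ, (∀ e ∈ E, ∑ v ∈ e, a v ≤ q) ∧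
      fractionalEdgeCoverNumber E ≤ (∑ v, a v : ℕ) / q := by
  obtain ⟨y, hy, hpack, hρ⟩ := exists_fractionalPacking_fractionalEdgeCoverNumber_le E hcov
  obtain ⟨q, hq, a, ha⟩ := exists_pos_nat_mul_eq_natCast y hy
  refine ⟨q, hq, a, fun e he => ?_, hρ.trans_eq ?_⟩
  · have : (∑ v ∈ e, a v : ℚ) ≤ q := by
      simpa [ha, ← mul_sum] using mul_le_mul_of_nonneg_left (hpack e he) q.cast_nonneg
    exact_mod_cast this
  · rw [Nat.cast_sum, sum_div]
    refine sum_congr rfl fun v _ => ?_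
    rw [eq_div_iff (by positivity)]
    exact_mod_cast ((ha v).trans (mul_comm _ _)).symm

theorem card_piFinset_le_card_join {D : Type*} [Finite D] (E : Finset (Finset V))
    (S : V → Finset D) :
    ∏ v, (S v).card ≤ Nat.card {t : V → D // ∀ e ∈ E,
      (fun v : {x // x ∈ e} => t v) ∈ Fintype.piFinset fun v : {x // x ∈ e} => S v} := by
  rw [← Fintype.card_piFinset, ← Nat.card_eq_finsetCard]
  exact Nat.card_le_card_of_injective
    (fun t => ⟨t, fun e _ => Fintype.mem_piFinset.2 fun v => Fintype.mem_piFinset.1 t.2 v⟩)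
    fun t t' h => Subtype.ext (congrArg Subtype.val h :)

theorem exists_relations_card_le_pow (E : Finset (Finset V)) (a : V → ℕ) (q : ℕ)
    {n : ℕ} (hn : 0 < n) (hE : ∀ e ∈ E, ∑ v ∈ e, a v ≤ q) :
    ∃ (D : Type) (_ : Fintype D) (R : (e : Finset V) → Finset ({x // x ∈ e} → D)),
      (∀ e ∈ E, (R e).card ≤ n ^ q) ∧
      n ^ ∑ v, a v ≤ Nat.card {t : V → D // ∀ e ∈ E, (fun v : {x // x ∈ e} => t v) ∈ R e} := by
  let S : V → Finset (Fin (n ^ ∑ v, a v)) := fun v =>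
    univ.map (Fin.castLEEmb (Nat.pow_le_pow_right hn (single_le_sum (by simp) (mem_univ v))))
  have hS : ∀ v, (S v).card = n ^ a v := by simp [S]
  refine ⟨_, inferInstance, fun e => Fintype.piFinset fun v : e => S v, fun e he => ?_, ?_⟩
  · rw [Fintype.card_piFinset]
    simp only [hS, prod_pow_eq_pow_sum, sum_coe_sort e a]
    exact Nat.pow_le_pow_right hn (hE e he)
  · simpa [hS, prod_pow_eq_pow_sum] using card_piFinset_le_card_join E S

end Hypergraph

theorem agm_join_lower_bound_general
    (V : Type) [Fintype V] [DecidableEq V]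
    (E : Finset (Finset V))
    (hcov : ∀ v : V, ∃ e ∈ E, v ∈ e) :
    ∀ M : ℕ, ∃ N : ℕ, M ≤ N ∧ 0 < N ∧
      ∃ (D : Type) (_ : Fintype D)
        (R : (e : Finset V) → Finset ({x // x ∈ e} → D)),
        (∀ e ∈ E, (R e).card ≤ N) ∧
        (N : ℝ) ^ sInf {w : ℝ | ∃ f : Finset V → ℝ,
            (∀ e ∈ E, 0 ≤ f e) ∧ (∀ e ∈ E, f e ≤ 1) ∧
            (∀ v : V, 1 ≤ ∑ e ∈ E.filter (fun e => v ∈ e), f e) ∧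
            w = ∑ e ∈ E, f e} ≤
          (Nat.card {t : V → D // ∀ e ∈ E, (fun v : {x // x ∈ e} => t v) ∈ R e} : ℝ) := by
  intro M
  obtain ⟨q, hq, a, hpack, hρ⟩ := exists_natPacking_fractionalEdgeCoverNumber_le_div E hcov
  obtain ⟨D, hD, R, hR, hjoin⟩ := exists_relations_card_le_pow E a q M.succ_pos hpack
  refine ⟨(M + 1) ^ q, M.le_succ.trans (Nat.le_self_pow hq.ne' _), by positivity, D, hD, R, hR, ?_⟩
  calc (((M + 1) ^ q : ℕ) : ℝ) ^ fractionalEdgeCoverNumber E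
      ≤ (((M + 1) ^ q : ℕ) : ℝ) ^ ((∑ v, a v : ℕ) / q : ℝ) :=
        Real.rpow_le_rpow_of_exponent_le (by exact_mod_cast Nat.one_le_pow _ _ M.succ_pos) hρ
    _ = ((M + 1) ^ ∑ v, a v : ℕ) := by
        rw [Nat.cast_pow, ← Real.rpow_natCast_mul (by positivity),
          mul_div_cancel₀ _ (by positivity), Real.rpow_natCast]
        norm_cast
    _ ≤ _ := by exact_mod_cast hjoin

/-- **AGM lower bound (tightness of the fractional edge cover bound).**
Let `H = (V, E)` be a hypergraph in which every hyperedge is nonempty and every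
vertex belongs to at least one hyperedge. Then for infinitely many positive
integers `N` there exist a finite domain `D` and, for each hyperedge `e ∈ E`,
a relation `R e ⊆ (e → D)` with `|R e| ≤ N`, such that the join (the set of all
tuples `t : V → D` whose restriction to `e` belongs to `R e` for every `e ∈ E`)
has size at least `N ^ ρ*(H)`, where `ρ*(H)` is the fractional edge cover number
of `H` (the infimum of the weights of fractional edge covers of `H`). -/
theorem agm_join_lower_bound
    (V : Type) [Fintype V] [DecidableEq V]
    (E : Finset (Finset V))
    (hEne : ∀ e ∈ E, e.Nonempty)
    (hcov : ∀ v : V, ∃ e ∈ E, v ∈ e) :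
    ∀ M : ℕ, ∃ N : ℕ, M ≤ N ∧ 0 < N ∧
      ∃ (D : Type) (_ : Fintype D)
        (R : (e : Finset V) → Finset ({x // x ∈ e} → D)),
        (∀ e ∈ E, (R e).card ≤ N) ∧
        (N : ℝ) ^ sInf {w : ℝ | ∃ f : Finset V → ℝ,
            (∀ e ∈ E, 0 ≤ f e) ∧ (∀ e ∈ E, f e ≤ 1) ∧
            (∀ v : V, 1 ≤ ∑ e ∈ E.filter (fun e => v ∈ e), f e) ∧
            w = ∑ e ∈ E, f e} ≤
          (Nat.card {t : V → D // ∀ e ∈ E, (fun v : {x // x ∈ e} => t v) ∈ R e} : ℝ) :=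
  agm_join_lower_bound_general V E hcov
end
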